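/- arXiv:1010.3776 — 3 statements merged into one kernel-verified Lean document; each statement's English description precedes it below -/
import Mathlib

section
/- Let V be a vector space with endomorphisms A, B satisfying [A,B] = c·id for a nonzero scalar c, and suppose A acts locally nilpotently on V. Then V is generated as a module over the subalgebra generated by B by the subspace ker A; more precisely, every m ∈ V lies in the span of { B^j v : j ≥ 0, v ∈ ker A }. -/
/-- Let `V` be a vector space over a field of characteristic zero with
endomorphisms `A`, `B` satisfying `[A,B] = AB - BA = c·id`, `c ≠ 0`, and suppose `A` acts
locally nilpotently on `V`.  Then every `m ∈ V` lies in the span of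
`{ B^j v : j ≥ 0, v ∈ ker A }`. -/
theorem stmt3 {K V : Type*} [Field K] [CharZero K] [AddCommGroup V] [Module K V]
    (A B : Module.End K V) (c : K) (hc : c ≠ 0)
    (hcomm : A * B - B * A = c • (1 : Module.End K V))
    (hnil : ∀ m : V, ∃ n : ℕ, (A ^ n) m = 0) :
    ∀ m : V, m ∈ Submodule.span K {x : V | ∃ (j : ℕ) (v : V), A v = 0 ∧ x = (B ^ j) v} := by
  set S := Submodule.span K {x : V | ∃ (j : ℕ) (v : V), A v = 0 ∧ x = (B ^ j) v} with hS
  -- pointwise commutator: A (B w) = B (A w) + c • w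
  have hABw : ∀ w : V, A (B w) = B (A w) + c • w := by
    intro w
    have h := congrFun (congrArg DFunLike.coe hcomm) w
    simp only [LinearMap.sub_apply, Module.End.mul_apply, LinearMap.smul_apply,
      Module.End.one_apply] at h
    exact sub_eq_iff_eq_add'.mp h
  -- A (B^(j+1) v) = (j+1) c • B^j v  when A v = 0
  have hkey : ∀ (j : ℕ) (v : V), A v = 0 → A ((B ^ (j+1)) v) = (((j : K)+1)*c) • (B ^ j) v := by
    intro j
    induction j with
    | zero =>
      intro v hv
      simp only [pow_one, pow_zero, Module.End.one_apply, Nat.cast_zero, zero_add, one_mul]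
      rw [hABw v, hv, map_zero, zero_add]
    | succ j ih =>
      intro v hv
      have hpow : (B ^ (j+2)) v = B ((B ^ (j+1)) v) := by
        rw [pow_succ', Module.End.mul_apply]
      rw [hpow, hABw, ih v hv, map_smul]
      have hpow2 : (B ^ (j+1)) v = B ((B ^ j) v) := by
        rw [pow_succ', Module.End.mul_apply]
      rw [hpow2]
      push_cast
      rw [← add_smul]
      ring_nf
  -- every element of S is A of an element of S
  have hint : ∀ s ∈ S, ∃ w ∈ S, A w = s := by
    intro s hs
    induction hs using Submodule.span_induction with
    | mem x hx =>
      obtain ⟨j, v, hv, rfl⟩ := hx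
      refine ⟨(((j : K)+1)*c)⁻¹ • (B ^ (j+1)) v, ?_, ?_⟩
      · exact Submodule.smul_mem _ _ (Submodule.subset_span ⟨j+1, v, hv, rfl⟩)
      · rw [map_smul, hkey j v hv, smul_smul, inv_mul_cancel₀, one_smul]
        have : ((j : K) + 1) ≠ 0 := Nat.cast_add_one_ne_zero j
        exact mul_ne_zero this hc
    | zero => exact ⟨0, Submodule.zero_mem _, map_zero _⟩
    | add x y hx hy ihx ihy =>
      obtain ⟨w1, hw1, hw1'⟩ := ihx
      obtain ⟨w2, hw2, hw2'⟩ := ihy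
      exact ⟨w1 + w2, Submodule.add_mem _ hw1 hw2, by rw [map_add, hw1', hw2']⟩
    | smul a x hx ihx =>
      obtain ⟨w, hw, hw'⟩ := ihx
      exact ⟨a • w, Submodule.smul_mem _ _ hw, by rw [map_smul, hw']⟩
  -- main induction on nilpotency degree
  have main : ∀ (n : ℕ) (m : V), (A ^ n) m = 0 → m ∈ S := by
    intro n
    induction n with
    | zero =>
      intro m hm
      simp only [pow_zero, Module.End.one_apply] at hm
      rw [hm]; exact Submodule.zero_mem _
    | succ n ih =>
      intro m hm
      have hAm : (A ^ n) (A m) = 0 := by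
        rw [← Module.End.mul_apply, ← pow_succ]
        exact hm
      obtain ⟨w, hwS, hwA⟩ := hint (A m) (ih (A m) hAm)
      have hker : A (m - w) = 0 := by rw [map_sub, hwA, sub_self]
      have : m - w ∈ S := Submodule.subset_span ⟨0, m - w, hker, by simp⟩
      have := Submodule.add_mem S this hwS
      simpa using this
  intro m
  obtain ⟨n, hn⟩ := hnil m
  exact main n m hn
end

section
/- In a vertex algebroid A over O_X, the operations descend to the quotient L_A = A / (O_X ∘ ∂O_X): the bracket x_(0) y induces a well-defined Lie bracket on L_A making it a Lie algebroid with anchor induced by π, using the axioms x_(0)(f∘y) = π(x)(f)∘y + f∘(x_(0)y) and x_(0)y + y_(0)x = ∂(x_(1)y). -/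
/-- (Algebraic model of a vertex algebroid.)  Let `R` be a commutative
`ℂ`-algebra (the functions) and `A` a `ℂ`-vector space with anchor `π : A → Der(R)`,
derivation `∂ : R → A` with `π ∘ ∂ = 0`, and operations `op : R × A → A` (`f ∘ v`),
`zero : A × A → A` (`x_(0) y`), `one : A × A → R` (`x_(1) y`) satisfying the vertex
algebroid axioms.  Then the operations descend to the quotient
`L_A = A / (O ∘ ∂O)`: with `S = span { f ∘ ∂g }`, the `O`-action and the bracket `x_(0) y`
preserve `S` in each argument, the bracket is antisymmetric modulo `S`, satisfies the
Jacobi identity modulo `S`, and the anchor kills `S` — so `L_A` becomes a Lie algebroid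
with anchor induced by `π`. -/
theorem stmt14 {R A : Type*} [CommRing R] [Algebra ℂ R]
    [AddCommGroup A] [Module ℂ A]
    (π : A →ₗ[ℂ] Derivation ℂ R R) (der : R →ₗ[ℂ] A)
    (op : R → A → A) (zero : A → A → A) (one : A → A → R)
    -- bilinearity of the operations
    (hop_addl : ∀ (f g : R) (v : A), op (f + g) v = op f v + op g v)
    (hop_addr : ∀ (f : R) (v w : A), op f (v + w) = op f v + op f w)
    (hop_smulr : ∀ (f : R) (s : ℂ) (v : A), op f (s • v) = s • op f v)
    (hzero_addl : ∀ x x' y : A, zero (x + x') y = zero x y + zero x' y)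
    (hzero_addr : ∀ x y y' : A, zero x (y + y') = zero x y + zero x y')
    (hzero_smull : ∀ (s : ℂ) (x y : A), zero (s • x) y = s • zero x y)
    (hzero_smulr : ∀ (s : ℂ) (x y : A), zero x (s • y) = s • zero x y)
    -- the vertex algebroid axioms
    (hpi_d : ∀ f : R, π (der f) = 0)
    (hunit : ∀ v : A, op 1 v = v)
    (hassoc : ∀ (f g : R) (v : A),
      op f (op g v) - op (f * g) v = op ((π v) f) (der g) + op ((π v) g) (der f))
    (hleib : ∀ (x : A) (f : R) (y : A),
      zero x (op f y) = op ((π x) f) y + op f (zero x y))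
    (hsymm : ∀ x y : A, zero x y + zero y x = der (one x y))
    (hanchor_op : ∀ (f : R) (v : A), π (op f v) = f • π v)
    (hop_one : ∀ (f : R) (x y : A),
      one (op f x) y = f * one x y - (π x) ((π y) f))
    (hzero_one : ∀ v x y : A,
      (π v) (one x y) = one (zero v x) y + one x (zero v y))
    (hd_der : ∀ f g : R, der (f * g) = op f (der g) + op g (der f))
    (hzero_d : ∀ (v : A) (f : R), zero v (der f) = der ((π v) f))
    (hone_d : ∀ (v : A) (f : R), one v (der f) = (π v) f)
    (hjacobi : ∀ x y z : A,
      zero x (zero y z) = zero (zero x y) z + zero y (zero x z)) :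
    ∀ S : Submodule ℂ A, S = Submodule.span ℂ {x : A | ∃ f g : R, x = op f (der g)} →
      -- the `O`-action preserves `S`
      ((∀ (f : R), ∀ x ∈ S, op f x ∈ S) ∧
      -- the bracket preserves `S` in each argument, so it descends to `A/S`
      (∀ x y : A, x ∈ S → zero x y ∈ S ∧ zero y x ∈ S) ∧
      -- antisymmetry modulo `S`
      (∀ x y : A, zero x y + zero y x ∈ S) ∧
      -- the anchor kills `S`, hence descends to `A/S`
      (∀ x ∈ S, π x = 0) ∧
      -- the Jacobi identity modulo `S`
      (∀ x y z : A,
        zero x (zero y z) - zero (zero x y) z - zero y (zero x z) ∈ S)) := by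

  intro S hS
  subst hS
  set S := Submodule.span ℂ {x : A | ∃ f g : R, x = op f (der g)} with hS
  have memS : ∀ f g : R, op f (der g) ∈ S := fun f g =>
    Submodule.subset_span ⟨f, g, rfl⟩
  have derS : ∀ h : R, der h ∈ S := fun h => by
    have := memS 1 h; rwa [hunit] at this
  have hop_zero : ∀ f : R, op f (0 : A) = 0 := fun f => by
    have := hop_smulr f 0 0; simpa using this
  -- O-action preserves S
  have hopS : ∀ (f : R), ∀ x ∈ S, op f x ∈ S := by
    intro f x hx
    induction hx using Submodule.span_induction with
    | mem x hx =>
      obtain ⟨g, h, rfl⟩ := hx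
      have key : op f (op g (der h)) = op (f * g) (der h) := by
        have := hassoc f g (der h)
        rw [hpi_d] at this
        simp only [Derivation.coe_zero, Pi.zero_apply] at this
        have : op f (op g (der h)) - op (f * g) (der h) = 0 := by
          rw [this]
          have h1 := hop_smulr ((0:R)) 0 (der g)
          -- op 0 v = 0 : use hop_addl
          have z1 : op (0:R) (der g) = 0 := by
            have := hop_addl 0 0 (der g); simpa using this
          have z2 : op (0:R) (der f) = 0 := by
            have := hop_addl 0 0 (der f); simpa using this
          rw [z1, z2, add_zero]
        exact sub_eq_zero.mp this
      rw [key]; exact memS _ _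
    | zero => rw [hop_zero]; exact S.zero_mem
    | add x y _ _ hx hy => rw [hop_addr]; exact S.add_mem hx hy
    | smul c x _ hx => rw [hop_smulr]; exact S.smul_mem c hx
  -- bracket preserves S in each argument
  have hzero_zero_r : ∀ x : A, zero x (0 : A) = 0 := fun x => by
    have := hzero_smulr 0 x 0; simpa using this
  have hzero_zero_l : ∀ y : A, zero (0 : A) y = 0 := fun y => by
    have := hzero_smull 0 0 y; simpa using this
  have hbr : ∀ x y : A, x ∈ S → zero x y ∈ S ∧ zero y x ∈ S := by
    intro x y hx
    induction hx using Submodule.span_induction with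
    | mem x hx =>
      obtain ⟨f, g, rfl⟩ := hx
      have hr : zero y (op f (der g)) ∈ S := by
        rw [hleib, hzero_d]
        exact S.add_mem (memS _ _) (hopS f _ (derS _))
      have hl : zero (op f (der g)) y ∈ S := by
        have := hsymm (op f (der g)) y
        have : zero (op f (der g)) y = der (one (op f (der g)) y) - zero y (op f (der g)) := by
          rw [← this]; abel
        rw [this]
        exact S.sub_mem (derS _) hr
      exact ⟨hl, hr⟩
    | zero => rw [hzero_zero_l, hzero_zero_r]; exact ⟨S.zero_mem, S.zero_mem⟩
    | add a b _ _ ha hb =>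
      rw [hzero_addl, hzero_addr]
      exact ⟨S.add_mem ha.1 hb.1, S.add_mem ha.2 hb.2⟩
    | smul c a _ ha =>
      rw [hzero_smull, hzero_smulr]
      exact ⟨S.smul_mem c ha.1, S.smul_mem c ha.2⟩
  refine ⟨hopS, hbr, ?_, ?_, ?_⟩
  · intro x y
    rw [hsymm]; exact derS _
  · intro x hx
    induction hx using Submodule.span_induction with
    | mem x hx =>
      obtain ⟨f, g, rfl⟩ := hx
      rw [hanchor_op, hpi_d, smul_zero]
    | zero => exact map_zero π
    | add a b _ _ ha hb => rw [map_add, ha, hb, add_zero]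
    | smul c a _ ha => rw [map_smul, ha, smul_zero]
  · intro x y z
    rw [hjacobi]
    have : zero (zero x y) z + zero y (zero x z) - zero (zero x y) z - zero y (zero x z) = 0 := by
      abel
    rw [this]
    exact S.zero_mem
end

section
/- Let V be a graded vertex algebra, M a graded V-module, and suppose m ∈ M satisfies v_n m = 0 for all v ∈ V and n > 0 (m is singular). Then for any a, b ∈ V, (a_{−1+Δ_a} b)_0 m = a_0 b_0 m modulo terms involving positive modes acting on m; consequently the assignment a ↦ (action of a_0 on Sing M) is compatible with the Zhu product in the sense that (a ∗ b)_0 m = a_0 b_0 m on Sing M whenever b_0 preserves Sing M. -/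
/-- The generalized binomial coefficient `C(m, j)` for `m ∈ ℤ`, as a complex number. -/
noncomputable def zchoose (m : ℤ) (j : ℕ) : ℂ :=
  (j.factorial : ℂ)⁻¹ * ∏ i ∈ Finset.range j, ((m : ℂ) - (i : ℂ))

/-- A vertex algebra over `ℂ`: a state-field correspondence `a ↦ Y a = Σ a_(n) z^{-n-1}`,
a vacuum vector, and a translation operator, subject to the truncation condition, the
vacuum axioms, translation covariance `(∂a)(z) = ∂_z a(z)`, and the Borcherds identity. -/
structure VertexAlgebra (V : Type*) [AddCommGroup V] [Module ℂ V] where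
  /-- the modes `a_(n)` of the field attached to `a` -/
  Y : V → ℤ → Module.End ℂ V
  /-- the vacuum vector `|0⟩` -/
  vac : V
  /-- the translation operator `∂` -/
  T : Module.End ℂ V
  add_left : ∀ (a a' : V) (n : ℤ), Y (a + a') n = Y a n + Y a' n
  smul_left : ∀ (s : ℂ) (a : V) (n : ℤ), Y (s • a) n = s • Y a n
  trunc : ∀ a b : V, ∃ N : ℤ, ∀ n : ℤ, N ≤ n → Y a n b = 0
  vac_field : ∀ (n : ℤ) (b : V), Y vac n b = if n = -1 then b else 0
  creation_nonneg : ∀ (a : V) (n : ℤ), 0 ≤ n → Y a n vac = 0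
  creation : ∀ a : V, Y a (-1) vac = a
  translation : ∀ (a : V) (n : ℤ), Y (T a) n = (-n : ℂ) • Y a (n - 1)
  borcherds : ∀ (a b c : V) (m n k : ℤ),
    ∑ᶠ j : ℕ, zchoose m j • Y (Y a (n + (j : ℤ)) b) (m + k - (j : ℤ)) c
      = ∑ᶠ j : ℕ, ((-1 : ℂ) ^ j * zchoose n j) •
          (Y a (m + n - (j : ℤ)) (Y b (k + (j : ℤ)) c)
            - (-1 : ℂ) ^ n • Y b (n + k - (j : ℤ)) (Y a (m + (j : ℤ)) c))

/-- Let `V` be a `ℤ_{≥0}`-graded vertex algebra (grading `Vgr`), `M` a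
`V`-module with mode action `actm v n = v_(n)` satisfying the module Borcherds identity,
and `Sing M = { m : v_k m = 0 for all homogeneous v and k > 0 }` (conformal-weight
notation `v_k = v_(k+Δ_v-1)`).  Then for homogeneous `a ∈ V_{Δ_a}`, `b ∈ V_{Δ_b}` and
`m ∈ Sing M` with `b_0 m ∈ Sing M`, the zero mode of the Zhu product
`a ∗ b = Σ_j C(Δ_a, j) a_(j-1) b` acts on `m` as `a_0 b_0 m`:
`(a ∗ b)_0 m = a_0 b_0 m`. -/
theorem stmt19 {V M : Type*} [AddCommGroup V] [Module ℂ V] [AddCommGroup M] [Module ℂ M]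
    (W : VertexAlgebra V) (Vgr : ℕ → Submodule ℂ V) (hgr : iSup Vgr = ⊤)
    (actm : V → ℤ → Module.End ℂ M)
    (hadd : ∀ (v v' : V) (n : ℤ), actm (v + v') n = actm v n + actm v' n)
    (hsmul : ∀ (s : ℂ) (v : V) (n : ℤ), actm (s • v) n = s • actm v n)
    (hvac : ∀ (n : ℤ) (x : M), actm W.vac n x = if n = -1 then x else 0)
    (htruncM : ∀ (v : V) (x : M), ∃ N : ℤ, ∀ n : ℤ, N ≤ n → actm v n x = 0)
    (hborcherdsM : ∀ (a b : V) (x : M) (p q k : ℤ),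
      ∑ᶠ j : ℕ, zchoose p j • actm (W.Y a (q + (j : ℤ)) b) (p + k - (j : ℤ)) x
        = ∑ᶠ j : ℕ, ((-1 : ℂ) ^ j * zchoose q j) •
            (actm a (p + q - (j : ℤ)) (actm b (k + (j : ℤ)) x)
              - (-1 : ℂ) ^ q • actm b (q + k - (j : ℤ)) (actm a (p + (j : ℤ)) x))) :
    ∀ (Δa Δb : ℕ) (a b : V), a ∈ Vgr Δa → b ∈ Vgr Δb →
      ∀ m : M,
        (∀ (Δ : ℕ) (v : V), v ∈ Vgr Δ → ∀ k : ℤ, 0 < k →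
          actm v (k + (Δ : ℤ) - 1) m = 0) →
        (∀ (Δ : ℕ) (v : V), v ∈ Vgr Δ → ∀ k : ℤ, 0 < k →
          actm v (k + (Δ : ℤ) - 1) (actm b ((Δb : ℤ) - 1) m) = 0) →
        (∑ᶠ j : ℕ, zchoose (Δa : ℤ) j •
            actm (W.Y a ((j : ℤ) - 1) b) (((Δa : ℤ) + (Δb : ℤ) - (j : ℤ)) - 1) m)
          = actm a ((Δa : ℤ) - 1) (actm b ((Δb : ℤ) - 1) m) := by
  intro Δa Δb a b ha hb m hsing hsing'
  have H := hborcherdsM a b m (Δa : ℤ) (-1) ((Δb : ℤ) - 1)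
  have hL : (∑ᶠ j : ℕ, zchoose (Δa : ℤ) j •
      actm (W.Y a (-1 + (j : ℤ)) b) ((Δa : ℤ) + ((Δb : ℤ) - 1) - (j : ℤ)) m)
      = ∑ᶠ j : ℕ, zchoose (Δa : ℤ) j •
          actm (W.Y a ((j : ℤ) - 1) b) (((Δa : ℤ) + (Δb : ℤ) - (j : ℤ)) - 1) m := by
    apply finsum_congr
    intro j
    have h1 : (-1 : ℤ) + (j : ℤ) = (j : ℤ) - 1 := by ring
    have h2 : (Δa : ℤ) + ((Δb : ℤ) - 1) - (j : ℤ) = ((Δa : ℤ) + (Δb : ℤ) - (j : ℤ)) - 1 := by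
      ring
    rw [h1, h2]
  have hR : (∑ᶠ j : ℕ, ((-1 : ℂ) ^ j * zchoose (-1) j) •
        (actm a ((Δa : ℤ) + (-1) - (j : ℤ)) (actm b (((Δb : ℤ) - 1) + (j : ℤ)) m)
          - (-1 : ℂ) ^ (-1 : ℤ) •
              actm b ((-1) + ((Δb : ℤ) - 1) - (j : ℤ)) (actm a ((Δa : ℤ) + (j : ℤ)) m)))
      = actm a ((Δa : ℤ) - 1) (actm b ((Δb : ℤ) - 1) m) := by
    rw [finsum_eq_single _ 0]
    · have hb0 : (Δb : ℤ) - 1 + (0 : ℕ) = (Δb : ℤ) - 1 := by push_cast; ring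
      have ha0 : actm a ((Δa : ℤ) + ((0 : ℕ) : ℤ)) m = 0 := by
        have := hsing Δa a ha 1 (by norm_num)
        have h : (1 : ℤ) + (Δa : ℤ) - 1 = (Δa : ℤ) + ((0 : ℕ) : ℤ) := by push_cast; ring
        rwa [h] at this
      have hz : zchoose (-1) 0 = 1 := by
        simp [zchoose]
      rw [hb0, ha0, hz]
      have h3 : (Δa : ℤ) + (-1) - ((0 : ℕ) : ℤ) = (Δa : ℤ) - 1 := by push_cast; ring
      rw [h3]
      simp
    · intro j hj
      have hjpos : 0 < (j : ℤ) := by exact_mod_cast Nat.pos_of_ne_zero hj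
      have hb1 : actm b (((Δb : ℤ) - 1) + (j : ℤ)) m = 0 := by
        have := hsing Δb b hb j hjpos
        have h : (j : ℤ) + (Δb : ℤ) - 1 = ((Δb : ℤ) - 1) + (j : ℤ) := by ring
        rwa [h] at this
      have ha1 : actm a ((Δa : ℤ) + (j : ℤ)) m = 0 := by
        have := hsing Δa a ha ((j : ℤ) + 1) (by omega)
        have h : ((j : ℤ) + 1) + (Δa : ℤ) - 1 = (Δa : ℤ) + (j : ℤ) := by ring
        rwa [h] at this
      rw [hb1, ha1]
      simp
  rw [hL] at H
  rw [H, hR]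
end
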